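/- Let Ψ¹,…,Ψ^M be linearly independent vectors in a complex Hilbert space Z such that the matrix 𝓔 = (ε_{ij}) defined by ⟨Ψ^i,Ψ^j⟩ = δ_{ij} + ε_{ij} satisfies ‖𝓔‖₁ < 1, and set ε_max := max_{1≤i≤M}|ε_{ii}|. Define Ψ̃¹ := Ψ¹ and, for 2 ≤ i ≤ M, Ψ̃^i := Ψ^i − Σ_{1≤j,k≤i−1} (A_{i−1}^{-1})_{jk} ⟨Ψ^k,Ψ^i⟩ Ψ^j, where A_{i−1} is the (i−1)×(i−1) Gram matrix with entries (A_{i−1})_{jk} = ⟨Ψ^j,Ψ^k⟩. Then for every 1 ≤ i ≤ M, ‖Ψ̃^i − Ψ^i‖ ≤ (1 + ε_max) ‖𝓔‖₁ (1 − ‖𝓔‖₁)^{-1}. -/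

import Mathlib

open scoped InnerProductSpace

/-- Maximum absolute column sum norm of a matrix. -/
noncomputable def matNorm1 {M : ℕ} {𝕜 : Type*} [NormedField 𝕜]
    (A : Matrix (Fin M) (Fin M) 𝕜) : ℝ :=
  ⨆ j, ∑ i, ‖A i j‖

/-- The Gram matrix of the first `i` vectors of `Ψ`. -/
noncomputable def gram {Z : Type*} [NormedAddCommGroup Z] [InnerProductSpace ℂ Z]
    {M : ℕ} (Ψ : Fin M → Z) (i : Fin M) : Matrix (Fin i.val) (Fin i.val) ℂ :=
  fun j k => ⟪Ψ (Fin.castLE i.isLt.le j), Ψ (Fin.castLE i.isLt.le k)⟫_ℂ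

/-- The Gram–Schmidt step: `Ψ i` minus its orthogonal projection onto the span of the
previous vectors, written via the inverse Gram matrix. -/
noncomputable def tildePsi {Z : Type*} [NormedAddCommGroup Z] [InnerProductSpace ℂ Z]
    {M : ℕ} (Ψ : Fin M → Z) (i : Fin M) : Z :=
  Ψ i - ∑ j : Fin i.val, ∑ k : Fin i.val,
    ((gram Ψ i)⁻¹ j k * ⟪Ψ (Fin.castLE i.isLt.le k), Ψ i⟫_ℂ) • Ψ (Fin.castLE i.isLt.le j)

/-!
The vector `tildePsi Ψ i - Ψ i` is `-∑ⱼ cⱼ Ψʲ` with `c = A⁻¹ b`, where `A = 1 + 𝓔'` is the Gram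
matrix of the earlier vectors (`𝓔'` a principal block of `𝓔`) and `bₖ = ⟨Ψᵏ, Ψⁱ⟩ = εₖᵢ`, so
`‖b‖₁ ≤ ‖𝓔‖₁`. The column sums of `𝓔'` are at most `‖𝓔‖₁ < 1`, so `c = b - 𝓔' c` gives
`‖c‖₁ ≤ (1 - ‖𝓔‖₁)⁻¹ ‖b‖₁`. Finally `‖Ψʲ‖² = 1 + Re εⱼⱼ` gives `‖Ψʲ‖ ≤ 1 + ε_max`.
-/

open scoped Matrix

lemma Finset.sum_comp_le_sum_of_injective {ι κ : Type*} [Fintype ι] [Fintype κ] {f : ι → κ}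
    (hf : f.Injective) {g : κ → ℝ} (hg : ∀ k, 0 ≤ g k) : ∑ i, g (f i) ≤ ∑ k, g k := by
  classical
  rw [← Finset.sum_image fun a _ b _ h => hf h]
  exact Finset.sum_le_univ_sum_of_nonneg hg

lemma norm_sum_smul_le {ι 𝕜 E : Type*} [Fintype ι] [NormedField 𝕜] [SeminormedAddCommGroup E]
    [NormedSpace 𝕜 E] (c : ι → 𝕜) (v : ι → E) {R : ℝ} (hv : ∀ j, ‖v j‖ ≤ R) :
    ‖∑ j, c j • v j‖ ≤ R * ∑ j, ‖c j‖ := by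
  calc ‖∑ j, c j • v j‖ ≤ ∑ j, ‖c j‖ * ‖v j‖ := by
        simpa only [norm_smul] using norm_sum_le Finset.univ fun j => c j • v j
    _ ≤ ∑ j, ‖c j‖ * R := by gcongr with j; exact hv j
    _ = R * ∑ j, ‖c j‖ := by rw [← Finset.sum_mul, mul_comm]

lemma norm_le_one_add_of_inner_self_eq {𝕜 E : Type*} [RCLike 𝕜] [SeminormedAddCommGroup E]
    [InnerProductSpace 𝕜 E] {x : E} {e : 𝕜} (h : ⟪x, x⟫_𝕜 = 1 + e) : ‖x‖ ≤ 1 + ‖e‖ := by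
  have hsq : ‖x‖ * ‖x‖ ≤ 1 + ‖e‖ := by
    rw [← inner_self_eq_norm_mul_norm (𝕜 := 𝕜), h, map_add, RCLike.one_re]
    linarith [RCLike.re_le_norm e]
  nlinarith [norm_nonneg x, norm_nonneg e]

namespace Matrix

variable {m n 𝕜 : Type*} [Fintype m] [Fintype n]

lemma sum_norm_apply_le_matNorm1 {M : ℕ} [NormedField 𝕜] (A : Matrix (Fin M) (Fin M) 𝕜)
    (j : Fin M) : ∑ i, ‖A i j‖ ≤ matNorm1 A :=
  le_ciSup (f := fun j => ∑ i, ‖A i j‖) (Set.finite_range _).bddAbove j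

lemma sum_norm_mulVec_le [NormedRing 𝕜] (A : Matrix m n 𝕜) (v : n → 𝕜) {c : ℝ}
    (hA : ∀ l, ∑ j, ‖A j l‖ ≤ c) : ∑ j, ‖(A *ᵥ v) j‖ ≤ c * ∑ l, ‖v l‖ :=
  calc ∑ j, ‖(A *ᵥ v) j‖ ≤ ∑ j, ∑ l, ‖A j l‖ * ‖v l‖ := by
        gcongr with j
        exact (norm_sum_le _ _).trans (Finset.sum_le_sum fun l _ => norm_mul_le _ _)
    _ = ∑ l, (∑ j, ‖A j l‖) * ‖v l‖ := by
        rw [Finset.sum_comm]; simp only [Finset.sum_mul]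
    _ ≤ ∑ l, c * ‖v l‖ := by gcongr with l; exact hA l
    _ = c * ∑ l, ‖v l‖ := Finset.mul_sum _ _ _ |>.symm

lemma sum_norm_inv_one_add_mulVec_le [DecidableEq n] [NormedCommRing 𝕜] (E : Matrix n n 𝕜)
    (v : n → 𝕜) {c : ℝ} (hE : ∀ l, ∑ j, ‖E j l‖ ≤ c) (hc : c < 1) :
    ∑ j, ‖((1 + E)⁻¹ *ᵥ v) j‖ ≤ (1 - c)⁻¹ * ∑ l, ‖v l‖ := by
  by_cases hdet : IsUnit (1 + E).det
  · set w := (1 + E)⁻¹ *ᵥ v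
    have hw : w = v - E *ᵥ w := by
      have hv : (1 + E) *ᵥ w = v := by
        rw [mulVec_mulVec, mul_nonsing_inv _ hdet, one_mulVec]
      rw [← hv, add_mulVec, one_mulVec, add_sub_cancel_right]
    have hrec : ∑ j, ‖w j‖ ≤ ∑ l, ‖v l‖ + c * ∑ j, ‖w j‖ :=
      calc ∑ j, ‖w j‖ ≤ ∑ j, (‖v j‖ + ‖(E *ᵥ w) j‖) := by
            gcongr with j
            conv_lhs => rw [hw]
            exact norm_sub_le _ _
        _ = ∑ l, ‖v l‖ + ∑ j, ‖(E *ᵥ w) j‖ := Finset.sum_add_distrib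
        _ ≤ ∑ l, ‖v l‖ + c * ∑ j, ‖w j‖ := by gcongr; exact sum_norm_mulVec_le E w hE
    rw [le_inv_mul_iff₀ (by linarith)]
    linarith
  · -- the junk inverse of a singular matrix is `0`
    rw [nonsing_inv_apply_not_isUnit _ hdet, zero_mulVec]
    simp only [Pi.zero_apply, norm_zero, Finset.sum_const_zero]
    exact mul_nonneg (inv_nonneg.mpr (by linarith)) (Finset.sum_nonneg fun _ _ => norm_nonneg _)

end Matrix

section GramSchmidt

variable {Z : Type*} [NormedAddCommGroup Z] [InnerProductSpace ℂ Z] {M : ℕ}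

lemma tildePsi_sub_self (Ψ : Fin M → Z) (i : Fin M) :
    tildePsi Ψ i - Ψ i = -∑ j : Fin i.val,
      ((gram Ψ i)⁻¹ *ᵥ fun k => ⟪Ψ (Fin.castLE i.isLt.le k), Ψ i⟫_ℂ) j •
        Ψ (Fin.castLE i.isLt.le j) := by
  simp only [tildePsi, sub_sub_cancel_left, Matrix.mulVec, dotProduct, Finset.sum_smul]

lemma gram_eq_one_add_submatrix (Ψ : Fin M → Z) (ε : Matrix (Fin M) (Fin M) ℂ)
    (hε : ∀ i j, ⟪Ψ i, Ψ j⟫_ℂ = (if i = j then 1 else 0) + ε i j) (i : Fin M) :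
    gram Ψ i = 1 + ε.submatrix (Fin.castLE i.isLt.le) (Fin.castLE i.isLt.le) := by
  ext j k
  simp only [gram, hε, Fin.castLE_inj, Matrix.add_apply, Matrix.one_apply,
    Matrix.submatrix_apply]

end GramSchmidt

theorem stmt5_general {Z : Type*} [NormedAddCommGroup Z] [InnerProductSpace ℂ Z]
    {M : ℕ} (Ψ : Fin M → Z)
    (ε : Matrix (Fin M) (Fin M) ℂ)
    (hε : ∀ i j, (⟪Ψ i, Ψ j⟫_ℂ) = (if i = j then 1 else 0) + ε i j)
    (hsmall : matNorm1 ε < 1)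
    (εmax : ℝ) (hεmax : εmax = ⨆ i, ‖ε i i‖) :
    ∀ i : Fin M, ‖tildePsi Ψ i - Ψ i‖ ≤ (1 + εmax) * matNorm1 ε * (1 - matNorm1 ε)⁻¹ := by
  intro i
  set ι := Fin.castLE i.isLt.le
  have hcol : ∀ l, ∑ j, ‖ε (ι j) l‖ ≤ matNorm1 ε := fun l =>
    (Finset.sum_comp_le_sum_of_injective (Fin.castLE_injective _) fun _ => norm_nonneg _).trans
      (ε.sum_norm_apply_le_matNorm1 l)
  have hb : ∑ k, ‖⟪Ψ (ι k), Ψ i⟫_ℂ‖ ≤ matNorm1 ε := by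
    refine le_of_eq_of_le (Finset.sum_congr rfl fun k _ => ?_) (hcol i)
    rw [hε, if_neg (Fin.ne_of_lt k.isLt), zero_add]
  have hΨ : ∀ j, ‖Ψ j‖ ≤ 1 + εmax := fun j => by
    refine (norm_le_one_add_of_inner_self_eq (by rw [hε, if_pos rfl])).trans ?_
    rw [hεmax]
    gcongr
    exact le_ciSup (f := fun j => ‖ε j j‖) (Set.finite_range _).bddAbove j
  rw [tildePsi_sub_self, norm_neg, gram_eq_one_add_submatrix Ψ ε hε]
  calc _ ≤ (1 + εmax) * ∑ j, ‖((1 + ε.submatrix ι ι)⁻¹ *ᵥ fun k => ⟪Ψ (ι k), Ψ i⟫_ℂ) j‖ :=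
        norm_sum_smul_le _ _ fun j => hΨ (ι j)
    _ ≤ (1 + εmax) * ((1 - matNorm1 ε)⁻¹ * matNorm1 ε) := by
        have hR : 0 ≤ 1 + εmax := (norm_nonneg _).trans (hΨ i)
        gcongr
        refine (Matrix.sum_norm_inv_one_add_mulVec_le _ _ (fun l => hcol (ι l)) hsmall).trans ?_
        gcongr
    _ = (1 + εmax) * matNorm1 ε * (1 - matNorm1 ε)⁻¹ := by ring

theorem stmt5 {Z : Type*} [NormedAddCommGroup Z] [InnerProductSpace ℂ Z] [CompleteSpace Z]
    {M : ℕ} (hM : 0 < M) (Ψ : Fin M → Z) (hΨ : LinearIndependent ℂ Ψ)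
    (ε : Matrix (Fin M) (Fin M) ℂ)
    (hε : ∀ i j, (⟪Ψ i, Ψ j⟫_ℂ) = (if i = j then 1 else 0) + ε i j)
    (hsmall : matNorm1 ε < 1)
    (εmax : ℝ) (hεmax : εmax = ⨆ i, ‖ε i i‖) :
    ∀ i : Fin M, ‖tildePsi Ψ i - Ψ i‖ ≤ (1 + εmax) * matNorm1 ε * (1 - matNorm1 ε)⁻¹ :=
  stmt5_general Ψ ε hε hsmall εmax hεmax
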